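/- Let G : (0, π) → ℝ be defined by G(r) = −cos(2r)/sin(r). For each integer k ≥ 0 there is a constant C(k) such that for all r ∈ (0, 1) and all integers 0 ≤ j ≤ k, one has r^j · |(d/dr)^j (G(r) + 1/r)| ≤ C(k)·r. -/

import Mathlib

/- STATEMENT 18: Weighted C^k estimates for G(r) = −cos(2r)/sin(r):
for each k there is C(k) with r^j·|(d/dr)^j (G(r) + 1/r)| ≤ C(k)·r
for all r ∈ (0,1) and 0 ≤ j ≤ k. -/

noncomputable section
open Real Set

/-- The profile `G(r) = −cos(2r)/sin(r)`. -/
def Gprof4 (r : ℝ) : ℝ := -Real.cos (2 * r) / Real.sin r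

namespace St18

def f0 : ℝ → ℝ := fun z => z - Real.sin z
def A1 : ℝ → ℝ := dslope f0 0
def A2 : ℝ → ℝ := dslope A1 0
def A3 : ℝ → ℝ := dslope A2 0
def B0 : ℝ → ℝ := dslope Real.sin 0

lemma analyticAt_realSin (x : ℝ) : AnalyticAt ℝ Real.sin x := by
  have h2 : AnalyticAt ℝ Complex.sin (x : ℂ) :=
    (Complex.differentiable_sin.analyticAt _).restrictScalars
  have h4 : AnalyticAt ℝ (fun y : ℝ => (Complex.sin y).re) x :=
    (Complex.reCLM.analyticAt _).comp (h2.comp (Complex.ofRealCLM.analyticAt x))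
  refine h4.congr ?_
  filter_upwards with y
  simp [← Complex.ofReal_sin]

lemma analyticAt_dslope0 {g : ℝ → ℝ} (hg : ∀ x, AnalyticAt ℝ g x) (x : ℝ) :
    AnalyticAt ℝ (dslope g 0) x := by
  rcases eq_or_ne x 0 with rfl | hx
  · obtain ⟨p, hp⟩ := hg 0
    exact ⟨p.fslope, hp.has_fpower_series_dslope_fslope⟩
  · have h : AnalyticAt ℝ (fun z : ℝ => (g z - g 0) / z) x :=
      ((hg x).sub analyticAt_const).div (analyticAt_id) hx
    refine h.congr ?_
    filter_upwards [eventually_ne_nhds hx] with z hz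
    rw [dslope_of_ne _ hz, slope_def_field]
    simp

lemma dslope_fact {g : ℝ → ℝ} (h0 : g 0 = 0) (z : ℝ) : g z = z * dslope g 0 z := by
  have h := sub_smul_dslope g 0 z
  simp [h0, smul_eq_mul] at h
  linarith

lemma hf0 : ∀ x, AnalyticAt ℝ f0 x := fun x => (analyticAt_id).sub (analyticAt_realSin x)
lemma hA1 : ∀ x, AnalyticAt ℝ A1 x := analyticAt_dslope0 hf0
lemma hA2 : ∀ x, AnalyticAt ℝ A2 x := analyticAt_dslope0 hA1
lemma hA3 : ∀ x, AnalyticAt ℝ A3 x := analyticAt_dslope0 hA2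
lemma hB0 : ∀ x, AnalyticAt ℝ B0 x := analyticAt_dslope0 analyticAt_realSin

lemma f0_zero : f0 0 = 0 := by simp [f0]

lemma A1_zero : A1 0 = 0 := by
  have h : HasDerivAt f0 (1 - Real.cos 0) 0 := (hasDerivAt_id 0).sub (Real.hasDerivAt_sin 0)
  rw [A1, dslope_same, h.deriv]
  simp

lemma A1_even (z : ℝ) : A1 (-z) = A1 z := by
  rcases eq_or_ne z 0 with rfl | hz
  · simp
  have hz' : (-z) ≠ 0 := neg_ne_zero.mpr hz
  rw [A1, dslope_of_ne _ hz', dslope_of_ne _ hz, slope_def_field, slope_def_field]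
  simp only [f0, Real.sin_neg, f0_zero]
  field_simp [f0]
  simp only [Real.sin_zero]; ring

lemma A2_zero : A2 0 = 0 := by
  rw [A2, dslope_same]
  have h1 : HasDerivAt A1 (deriv A1 0) 0 := ((hA1 0).differentiableAt).hasDerivAt
  have h2 : HasDerivAt (fun z : ℝ => A1 (-z)) (deriv A1 0 * (-1)) 0 := by
    have h1' : HasDerivAt A1 (deriv A1 0) (-0 : ℝ) := by simpa using h1
    have := h1'.comp 0 (hasDerivAt_neg (0:ℝ))
    exact this
  have h3 : HasDerivAt A1 (deriv A1 0 * (-1)) 0 := by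
    have he : (fun z : ℝ => A1 (-z)) = A1 := funext fun z => A1_even z
    rwa [he] at h2
  have := h3.unique h1
  linarith

lemma B0_zero : B0 0 = 1 := by
  rw [B0, dslope_same, Real.deriv_sin]
  simp

lemma fact3 (z : ℝ) : z - Real.sin z = z ^ 3 * A3 z := by
  have e1 : f0 z = z * A1 z := dslope_fact f0_zero z
  have e2 : A1 z = z * A2 z := dslope_fact A1_zero z
  have e3 : A2 z = z * A3 z := dslope_fact A2_zero z
  have : f0 z = z ^ 3 * A3 z := by rw [e1, e2, e3]; ring
  simpa [f0] using this

lemma factB (z : ℝ) : Real.sin z = z * B0 z := dslope_fact (by simp) z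

def Hfun : ℝ → ℝ := fun r => 2 * Real.sin r - r * A3 r / B0 r

lemma Hfun_zero : Hfun 0 = 0 := by simp [Hfun]

lemma key (s : ℝ) (hs0 : s ≠ 0) (hsin : Real.sin s ≠ 0) : Gprof4 s + 1 / s = Hfun s := by
  have hB : B0 s ≠ 0 := by
    intro h
    apply hsin
    rw [factB s, h, mul_zero]
  have hA3s : A3 s = (s - Real.sin s) / s ^ 3 := by
    rw [fact3 s]
    field_simp
  have hB0s : B0 s = Real.sin s / s := by
    rw [factB s]
    field_simp
  have hcos : Real.cos (2 * s) = 1 - 2 * Real.sin s ^ 2 := by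
    have := Real.sin_sq_add_cos_sq s
    rw [Real.cos_two_mul]
    nlinarith
  rw [Gprof4, Hfun, hA3s, hB0s, hcos]
  field_simp
  ring

def U : Set ℝ := {x | B0 x ≠ 0}

lemma U_open : IsOpen U := by
  have hc : Continuous B0 := continuous_iff_continuousAt.mpr fun x => (hB0 x).continuousAt
  exact isOpen_compl_singleton.preimage hc

lemma Icc_subset_U : Icc (0:ℝ) 1 ⊆ U := by
  intro x hx
  rcases eq_or_ne x 0 with rfl | hx0
  · simp [U, B0_zero]
  · have hx1 : 0 < x := lt_of_le_of_ne hx.1 (Ne.symm hx0)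
    have hsin : 0 < Real.sin x :=
      Real.sin_pos_of_pos_of_lt_pi hx1 (lt_of_le_of_lt hx.2 (by linarith [Real.pi_gt_three]))
    intro h
    rw [factB x, h, mul_zero] at hsin
    exact lt_irrefl 0 hsin

lemma Hfun_analyticOn : AnalyticOnNhd ℝ Hfun U := by
  intro x hx
  exact (analyticAt_const.mul (analyticAt_realSin x)).sub
    (((analyticAt_id).mul (hA3 x)).div (hB0 x) hx)

lemma iter_analytic (j : ℕ) : AnalyticOnNhd ℝ (iteratedDeriv j Hfun) U := by
  induction j with
  | zero => simpa [iteratedDeriv_zero] using Hfun_analyticOn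
  | succ n ih =>
      rw [iteratedDeriv_succ]
      exact ih.deriv

lemma bound_one (j : ℕ) : ∃ C : ℝ, ∀ x ∈ Icc (0:ℝ) 1, |iteratedDeriv j Hfun x| ≤ C := by
  have hc : ContinuousOn (iteratedDeriv j Hfun) (Icc (0:ℝ) 1) :=
    fun x hx => ((iter_analytic j x (Icc_subset_U hx)).continuousAt).continuousWithinAt
  obtain ⟨C, hC⟩ := isCompact_Icc.exists_bound_of_continuousOn hc
  exact ⟨C, fun x hx => hC x hx⟩

lemma bounds (k : ℕ) : ∃ C : ℝ, 0 ≤ C ∧ ∀ j ≤ k, ∀ x ∈ Icc (0:ℝ) 1,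
    |iteratedDeriv j Hfun x| ≤ C := by
  induction k with
  | zero =>
      obtain ⟨C, hC⟩ := bound_one 0
      refine ⟨max C 0, le_max_right _ _, ?_⟩
      intro j hj x hx
      interval_cases j
      exact le_trans (hC x hx) (le_max_left _ _)
  | succ n ih =>
      obtain ⟨C, hC0, hC⟩ := ih
      obtain ⟨D, hD⟩ := bound_one (n+1)
      refine ⟨max C D, le_trans hC0 (le_max_left _ _), ?_⟩
      intro j hj x hx
      rcases Nat.lt_or_ge j (n+1) with h | h
      · exact le_trans (hC j (Nat.lt_succ_iff.mp h) x hx) (le_max_left _ _)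
      · have : j = n + 1 := le_antisymm hj h
        subst this
        exact le_trans (hD x hx) (le_max_right _ _)

end St18

open St18 in
theorem statement18 :
    ∀ k : ℕ, ∃ C : ℝ, ∀ r ∈ Set.Ioo (0:ℝ) 1, ∀ j : ℕ, j ≤ k →
      r ^ j * |iteratedDeriv j (fun s => Gprof4 s + 1 / s) r| ≤ C * r := by
  intro k
  obtain ⟨C, hC0, hC⟩ := bounds (k + 1)
  refine ⟨C, ?_⟩
  rintro r ⟨hr0, hr1⟩ j hj
  have hrIcc : r ∈ Icc (0:ℝ) 1 := ⟨le_of_lt hr0, le_of_lt hr1⟩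
  have hev : (fun s => Gprof4 s + 1 / s) =ᶠ[nhds r] Hfun := by
    have hmem : Ioo (0:ℝ) Real.pi ∈ nhds r :=
      Ioo_mem_nhds hr0 (lt_trans hr1 (by linarith [Real.pi_gt_three]))
    filter_upwards [hmem] with s hs
    exact key s (ne_of_gt hs.1) (ne_of_gt (Real.sin_pos_of_pos_of_lt_pi hs.1 hs.2))
  rw [hev.iteratedDeriv_eq j]
  rcases Nat.eq_zero_or_pos j with rfl | hjpos
  · simp only [pow_zero, one_mul, iteratedDeriv_zero]
    have hmvt : ‖Hfun r - Hfun 0‖ ≤ C * ‖r - 0‖ := by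
      refine (convex_Icc (0:ℝ) 1).norm_image_sub_le_of_norm_deriv_le
        (fun x hx => ((Hfun_analyticOn x (Icc_subset_U hx)).differentiableAt))
        (fun x hx => ?_) (left_mem_Icc.mpr zero_le_one) hrIcc
      rw [Real.norm_eq_abs, ← iteratedDeriv_one]
      exact hC 1 (by omega) x hx
    rw [Hfun_zero, sub_zero, sub_zero, Real.norm_eq_abs, Real.norm_eq_abs,
      abs_of_pos hr0] at hmvt
    exact hmvt
  · have h1 : r ^ j ≤ r := by
      calc r ^ j ≤ r ^ 1 := pow_le_pow_of_le_one (le_of_lt hr0) (le_of_lt hr1) hjpos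
      _ = r := pow_one r
    have h2 : |iteratedDeriv j Hfun r| ≤ C := hC j (by omega) r hrIcc
    calc r ^ j * |iteratedDeriv j Hfun r| ≤ r * C :=
          mul_le_mul h1 h2 (abs_nonneg _) (le_of_lt hr0)
      _ = C * r := mul_comm _ _
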